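/- arXiv:2510.01394 — 3 statements merged into one kernel-verified Lean document; each statement's English description precedes it below -/
import Mathlib

section
/- Let D have CDF F and fair-cap value τ for cost c > 0 (so E[(v − τ)_+] = c). Let v_1, …, v_n be i.i.d. from D with v_n independent of v_{1:n−1}, let M = max{v_1, …, v_{n−1}}, Δ = (v_n − M)_+ − c, and B the event that M ∈ [τ, τ + σ] for some fixed σ > 0. Then E[Δ·1_B] ≥ −σ(1 − F(τ))·P[B]. -/
/-!
For `τ ≤ M ≤ τ + σ` the loss is bounded below pointwise:
`(x - M)_+ ≥ (x - τ)_+ - σ·1_{x > τ}`. Since `v_n` is independent of `M`, integrating in `v_n`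
first and using the fair-cap identity `E[(v - τ)_+] = c` bounds the expected loss on `B`
below by `-σ·P(v_n > τ)`, uniformly in `M`.
-/

open MeasureTheory Set

theorem MeasurableEquiv.coe_piFinSuccAbove_last (α : Type*) [MeasurableSpace α] (m : ℕ) :
    ⇑(MeasurableEquiv.piFinSuccAbove (fun _ : Fin (m + 1) => α) (Fin.last m)) =
      fun ω => (ω (Fin.last m), Fin.init ω) := by
  funext ω
  simp [MeasurableEquiv.piFinSuccAbove_apply]

section

variable {α : Type*} [MeasurableSpace α]

theorem measurableEmbedding_last_init (m : ℕ) :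
    MeasurableEmbedding fun ω : Fin (m + 1) → α => (ω (Fin.last m), Fin.init ω) :=
  MeasurableEquiv.coe_piFinSuccAbove_last α m ▸ MeasurableEquiv.measurableEmbedding _

theorem measurePreserving_last_init (μ : Measure α) [SigmaFinite μ] (m : ℕ) :
    MeasurePreserving (fun ω : Fin (m + 1) → α => (ω (Fin.last m), Fin.init ω))
      (Measure.pi fun _ => μ) (μ.prod (Measure.pi fun _ => μ)) :=
  MeasurableEquiv.coe_piFinSuccAbove_last α m ▸
    measurePreserving_piFinSuccAbove (fun _ => μ) (Fin.last m)

end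

theorem posPart_sub_le_posPart_sub_add_indicator {τ σ M : ℝ} (hM : M ≤ τ + σ) (x : ℝ) :
    max (x - τ) 0 ≤ max (x - M) 0 + (Ioi τ).indicator (fun _ => σ) x := by
  rcases lt_or_ge τ x with hx | hx
  · rw [indicator_of_mem (mem_Ioi.2 hx), max_eq_left (by linarith)]
    linarith [le_max_left (x - M) 0]
  · rw [indicator_of_notMem (notMem_Ioi.2 hx), max_eq_right (by linarith)]
    simp

theorem abs_posPart_sub_sub_le {τ M : ℝ} (hM : τ ≤ M) (x c : ℝ) :
    |max (x - M) 0 - c| ≤ max (x - τ) 0 + |c| :=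
  (abs_sub _ _).trans <| by
    rw [abs_of_nonneg (le_max_right _ _)]
    gcongr

section

variable {Y : Type*} [MeasurableSpace Y] {μ : Measure ℝ} [IsProbabilityMeasure μ]
  {ν : Measure Y} [IsFiniteMeasure ν] {c τ σ : ℝ} {M : Y → ℝ}

theorem integrable_posPart_sub_sub_of_ae_le (hInt : Integrable (fun v => max (v - τ) 0) μ)
    (hM : Measurable M) (hτM : ∀ᵐ y ∂ν, τ ≤ M y) :
    Integrable (fun p : ℝ × Y => max (p.1 - M p.2) 0 - c) (μ.prod ν) := by
  refine ((hInt.add (integrable_const |c|)).comp_fst ν).mono' (by fun_prop) ?_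
  filter_upwards [Measure.quasiMeasurePreserving_snd.ae hτM] with p hp
  exact abs_posPart_sub_sub_le hp p.1 c

theorem neg_mul_le_integral_posPart_sub_sub (hInt : Integrable (fun v => max (v - τ) 0) μ)
    (hfair : ∫ v, max (v - τ) 0 ∂μ = c) (hM : Measurable M)
    (hMσ : ∀ᵐ y ∂ν, M y ∈ Icc τ (τ + σ)) :
    -σ * μ.real (Ioi τ) * ν.real univ ≤ ∫ p, (max (p.1 - M p.2) 0 - c) ∂(μ.prod ν) := by
  have hind : Integrable ((Ioi τ).indicator fun _ => σ) μ :=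
    (integrable_const σ).indicator measurableSet_Ioi
  have hdiff : Integrable (fun x => max (x - τ) 0 - (Ioi τ).indicator (fun _ => σ) x) μ :=
    hInt.sub hind
  have hlower : ∫ x, (max (x - τ) 0 - (Ioi τ).indicator (fun _ => σ) x - c) ∂μ
      = -σ * μ.real (Ioi τ) := by
    rw [integral_sub hdiff (integrable_const c), integral_sub hInt hind, hfair,
      integral_indicator_const _ measurableSet_Ioi, integral_const, probReal_univ, smul_eq_mul,
      smul_eq_mul]
    ring
  calc -σ * μ.real (Ioi τ) * ν.real univ
      = ∫ p, (max (p.1 - τ) 0 - (Ioi τ).indicator (fun _ => σ) p.1 - c) ∂(μ.prod ν) := by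
        rw [integral_fun_fst (fun x => max (x - τ) 0 - (Ioi τ).indicator (fun _ => σ) x - c),
          hlower, smul_eq_mul, mul_comm]
    _ ≤ ∫ p, (max (p.1 - M p.2) 0 - c) ∂(μ.prod ν) := by
        refine integral_mono_ae ((hdiff.sub (integrable_const c)).comp_fst ν)
          (integrable_posPart_sub_sub_of_ae_le hInt hM (hMσ.mono fun _ h => h.1)) ?_
        filter_upwards [Measure.quasiMeasurePreserving_snd.ae hMσ] with p hp
        linarith [posPart_sub_le_posPart_sub_add_indicator hp.2 p.1]

end

theorem faircap_boundary_loss_bound_general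
    (μ : Measure ℝ) [IsProbabilityMeasure μ] (c τ σ : ℝ)
    (hInt : Integrable (fun v => max (v - τ) 0) μ)
    (hfair : ∫ v, max (v - τ) 0 ∂μ = c)
    (m : ℕ) :
    -σ * (1 - (μ (Set.Iic τ)).toReal) *
        ((Measure.pi fun _ : Fin (m + 1) => μ)
          {ω | (⨆ i : Fin m, ω i.castSucc) ∈ Set.Icc τ (τ + σ)}).toReal
      ≤ ∫ ω in {ω : Fin (m + 1) → ℝ |
            (⨆ i : Fin m, ω i.castSucc) ∈ Set.Icc τ (τ + σ)},
          (max (ω (Fin.last m) - ⨆ i : Fin m, ω i.castSucc) 0 - c)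
          ∂(Measure.pi fun _ : Fin (m + 1) => μ) := by
  set f := fun ω : Fin (m + 1) → ℝ => (ω (Fin.last m), Fin.init ω)
  set B := (fun y : Fin m → ℝ => ⨆ i, y i) ⁻¹' Icc τ (τ + σ)
  have hM : Measurable fun y : Fin m → ℝ => ⨆ i, y i := Measurable.iSup measurable_pi_apply
  have hB : MeasurableSet B := hM measurableSet_Icc
  have hevent : {ω : Fin (m + 1) → ℝ | (⨆ i : Fin m, ω i.castSucc) ∈ Icc τ (τ + σ)}
      = f ⁻¹' (univ ×ˢ B) := by
    ext ω
    simp [f, B, Fin.init]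
  have hf : MeasurePreserving f (Measure.pi fun _ => μ) (μ.prod (Measure.pi fun _ => μ)) :=
    measurePreserving_last_init μ m
  set g := fun p : ℝ × (Fin m → ℝ) => max (p.1 - ⨆ i, p.2 i) 0 - c
  change _ ≤ ∫ ω in _, g (f ω) ∂_
  rw [hevent, hf.setIntegral_preimage_emb (measurableEmbedding_last_init m) g,
    hf.measure_preimage (MeasurableSet.univ.prod hB).nullMeasurableSet, Measure.prod_prod,
    measure_univ, one_mul, ← Measure.prod_restrict, Measure.restrict_univ, ← measureReal_def,
    ← measureReal_def, ← probReal_compl_eq_one_sub measurableSet_Iic, compl_Iic]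
  have hbound := neg_mul_le_integral_posPart_sub_sub (c := c)
    (ν := (Measure.pi fun _ => μ).restrict B) hInt hfair hM (ae_restrict_mem hB)
  rwa [measureReal_restrict_apply_univ] at hbound

theorem faircap_boundary_loss_bound
    (μ : Measure ℝ) [IsProbabilityMeasure μ] (c τ σ : ℝ) (hc : 0 < c) (hσ : 0 < σ)
    (hInt : Integrable (fun v => max (v - τ) 0) μ)
    (hfair : ∫ v, max (v - τ) 0 ∂μ = c)
    (m : ℕ) (hm : 1 ≤ m) :
    -σ * (1 - (μ (Set.Iic τ)).toReal) *
        ((Measure.pi fun _ : Fin (m + 1) => μ)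
          {ω | (⨆ i : Fin m, ω i.castSucc) ∈ Set.Icc τ (τ + σ)}).toReal
      ≤ ∫ ω in {ω : Fin (m + 1) → ℝ |
            (⨆ i : Fin m, ω i.castSucc) ∈ Set.Icc τ (τ + σ)},
          (max (ω (Fin.last m) - ⨆ i : Fin m, ω i.castSucc) 0 - c)
          ∂(Measure.pi fun _ : Fin (m + 1) => μ) :=
  faircap_boundary_loss_bound_general μ c τ σ hInt hfair m
end

section
/- Let g(μ) = μ·log(μ/c) for μ > 0 and fixed c > 0. If μ ≥ e·c and 0 < r ≤ 1/2, and μ̂ satisfies μ̂(1−r) ≤ μ ≤ μ̂(1+r), then g(μ̂(1+r)) − g(μ̂(1−r)) ≤ 16·r·g(μ). -/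
theorem faircap_map_stability (c μ μhat r : ℝ) (hc : 0 < c)
    (hμ : Real.exp 1 * c ≤ μ) (hr : 0 < r) (hr' : r ≤ 1/2)
    (h1 : μhat * (1 - r) ≤ μ) (h2 : μ ≤ μhat * (1 + r)) :
    μhat * (1 + r) * Real.log (μhat * (1 + r) / c)
      - μhat * (1 - r) * Real.log (μhat * (1 - r) / c)
      ≤ 16 * r * (μ * Real.log (μ / c)) := by
  have he : (1:ℝ) ≤ Real.exp 1 := by
    have := Real.add_one_le_exp (1:ℝ); linarith
  have hμpos : 0 < μ := lt_of_lt_of_le (by nlinarith [Real.exp_pos (1:ℝ)]) hμ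
  have hrm : (0:ℝ) < 1 - r := by linarith
  have hrp : (0:ℝ) < 1 + r := by linarith
  have hμhat : 0 < μhat := by nlinarith
  set a := μhat * (1 - r) with ha_def
  set b := μhat * (1 + r) with hb_def
  have ha : 0 < a := by positivity
  have hb : 0 < b := by positivity
  have hab : a ≤ b := by rw [ha_def, hb_def]; nlinarith
  have hμhat2 : μhat ≤ 2 * μ := by nlinarith
  have hba : b - a ≤ 4 * r * μ := by rw [ha_def, hb_def]; nlinarith
  have hb3 : b ≤ 3 * μ := by rw [hb_def]; nlinarith
  have hL : 1 ≤ Real.log (μ / c) := by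
    have h : Real.exp 1 ≤ μ / c := (le_div_iff₀ hc).2 (by linarith)
    calc (1:ℝ) = Real.log (Real.exp 1) := (Real.log_exp 1).symm
      _ ≤ Real.log (μ / c) := Real.log_le_log (Real.exp_pos 1) h
  have hlog3 : Real.log 3 ≤ 2 := by
    nlinarith [Real.log_le_sub_one_of_pos (by norm_num : (0:ℝ) < 3)]
  have hlogb : Real.log (b / c) ≤ Real.log 3 + Real.log (μ / c) := by
    have hle : b / c ≤ 3 * (μ / c) := by
      rw [div_le_iff₀ hc]; rw [mul_comm]
      calc b ≤ 3 * μ := hb3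
        _ = 3 * (μ / c) * c := by field_simp
        _ = c * (3 * (μ / c)) := by ring
    calc Real.log (b / c) ≤ Real.log (3 * (μ / c)) :=
          Real.log_le_log (by positivity) hle
      _ = Real.log 3 + Real.log (μ / c) :=
          Real.log_mul (by norm_num) (by positivity)
  have hlogb_lb : Real.log (μ / c) ≤ Real.log (b / c) :=
    Real.log_le_log (by positivity) (by gcongr)
  -- key algebraic bound
  have hlogdiff : Real.log (b / c) - Real.log (a / c) = Real.log (b / a) := by
    rw [Real.log_div hb.ne' hc.ne', Real.log_div ha.ne' hc.ne',
      Real.log_div hb.ne' ha.ne']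
    ring
  have h3 : a * Real.log (b / a) ≤ b - a := by
    have h2' : Real.log (b / a) ≤ b / a - 1 :=
      Real.log_le_sub_one_of_pos (by positivity)
    calc a * Real.log (b / a) ≤ a * (b / a - 1) := by
          exact mul_le_mul_of_nonneg_left h2' ha.le
      _ = b - a := by field_simp
  have key : b * Real.log (b / c) - a * Real.log (a / c)
      ≤ (b - a) * (1 + Real.log (b / c)) := by
    have hid : b * Real.log (b / c) - a * Real.log (a / c)
        = (b - a) * Real.log (b / c)
          + a * (Real.log (b / c) - Real.log (a / c)) := by ring
    rw [hid, hlogdiff]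
    nlinarith
  have h4 : 1 + Real.log (b / c) ≤ 4 * Real.log (μ / c) := by linarith
  have hfinal : (b - a) * (1 + Real.log (b / c))
      ≤ (4 * r * μ) * (4 * Real.log (μ / c)) := by
    apply mul_le_mul hba h4 (by linarith) (by positivity)
  calc b * Real.log (b / c) - a * Real.log (a / c)
      ≤ (b - a) * (1 + Real.log (b / c)) := key
    _ ≤ (4 * r * μ) * (4 * Real.log (μ / c)) := hfinal
    _ = 16 * r * (μ * Real.log (μ / c)) := by ring
end

section
/- Let D be Exponential(λ) with λ ∈ (0, 1/(ce)] for cost c > 0, let τ = log(1/(λc))/λ be the fair-cap value, and let σ(n) = 16τ·r_δ(n) with r_δ(n) = min{1/2, sqrt((6/n) log(2n(n+1)/δ))}. Then ∑_{n=1}^∞ σ(n)·(1 − F_λ(τ))·(F_λ(τ + σ(n))^{n−1} − F_λ(τ)^{n−1}) ≤ C·(1/λ)·polylog(1/δ) for a universal constant C, where F_λ(x) = 1 − e^{−λx}. -/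
/-!
Put `p = λc ≤ e⁻¹` and `L = log (1 / p) ≥ 1`, so `λτ = L` and `e^{-λτ} = p`. With `u = λσ(n)`
the `n`-th summand is `λ⁻¹ · u p ((1 - p e^{-u})^n - (1 - p)^n)`, and the definition of `r_δ`
gives `u ≤ 8L` and `n u² ≲ L² log (n / δ)`.
If `u ≤ 1`, the mean value theorem bounds the summand by `n u² p² (1 - p/e)^{n-1}`; against these
geometric weights the logarithm costs only `log (e / p) = L + 1`, and summing leaves `O(L³ p)`.
If `u > 1`, the summand is at most `8 L p ≤ 8 L p u⁸ ≲ L⁹ p / n²`, which is summable.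
Everything is then controlled by `L^k p = L^k e^{-L} ≤ k!`.
-/

open Real
open scoped Nat

noncomputable section

/-- With `p = 1 - F_λ(τ)` and `u = λσ`, this is `F_λ(τ + σ)^n - F_λ(τ)^n`. -/
def powGap (p u : ℝ) (n : ℕ) : ℝ := (1 - p * exp (-u)) ^ n - (1 - p) ^ n

section powGap

variable {p u : ℝ}

lemma one_sub_le_one_sub_mul_exp_neg (hp : 0 ≤ p) (hu : 0 ≤ u) : 1 - p ≤ 1 - p * exp (-u) := by
  have : p * exp (-u) ≤ p := mul_le_of_le_one_right hp (exp_le_one_iff.2 (by linarith))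
  linarith

lemma powGap_nonneg (hp0 : 0 ≤ p) (hp1 : p ≤ 1) (hu : 0 ≤ u) (n : ℕ) : 0 ≤ powGap p u n :=
  sub_nonneg.2 <| pow_le_pow_left₀ (by linarith) (one_sub_le_one_sub_mul_exp_neg hp0 hu) n

lemma powGap_le_one (hp0 : 0 ≤ p) (hp1 : p ≤ 1) (hu : 0 ≤ u) (n : ℕ) : powGap p u n ≤ 1 := by
  unfold powGap
  have hB : 0 ≤ 1 - p := by linarith
  have hA : 1 - p * exp (-u) ≤ 1 := by linarith [mul_nonneg hp0 (exp_pos (-u)).le]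
  linarith [pow_le_one₀ (hB.trans (one_sub_le_one_sub_mul_exp_neg hp0 hu)) hA (n := n),
    pow_nonneg hB n]

lemma powGap_le (hp0 : 0 ≤ p) (hp1 : p ≤ 1) (hu0 : 0 ≤ u) (hu1 : u ≤ 1) (n : ℕ) :
    powGap p u n ≤ n * (p * u) * (1 - p * exp (-1)) ^ (n - 1) := by
  have hB : 0 ≤ 1 - p := by linarith
  have hBA := one_sub_le_one_sub_mul_exp_neg hp0 hu0
  have hA0 : 0 ≤ 1 - p * exp (-u) := hB.trans hBA
  have hA : 1 - p * exp (-u) ≤ 1 - p * exp (-1) := by gcongr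
  have hAB : (1 - p * exp (-u)) - (1 - p) ≤ p * u := by
    nlinarith [add_one_le_exp (-u)]
  calc powGap p u n ≤ |(1 - p * exp (-u)) ^ n - (1 - p) ^ n| := le_abs_self _
    _ ≤ |(1 - p * exp (-u)) - (1 - p)| * n * max |1 - p * exp (-u)| |1 - p| ^ (n - 1) :=
      abs_pow_sub_pow_le ..
    _ ≤ p * u * n * (1 - p * exp (-1)) ^ (n - 1) := by
      rw [abs_of_nonneg (sub_nonneg.2 hBA), abs_of_nonneg hB, abs_of_nonneg hA0, max_eq_left hBA]
      gcongr
    _ = n * (p * u) * (1 - p * exp (-1)) ^ (n - 1) := by ring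

end powGap

lemma log_le_mul_sub_one_add_log_inv {x t : ℝ} (hx : 0 < x) (ht : 0 < t) :
    log x ≤ t * x - 1 + log t⁻¹ := by
  have := log_le_sub_one_of_pos (mul_pos ht hx)
  rw [log_mul ht.ne' hx.ne', log_inv] at *
  linarith

def logWeight (n : ℕ) : ℝ := log (2 * (n + 1) * (n + 2))

lemma logWeight_nonneg (n : ℕ) : 0 ≤ logWeight n :=
  log_nonneg (by nlinarith [(n.cast_nonneg : (0 : ℝ) ≤ n)])

lemma one_add_logWeight_le_sqrt (n : ℕ) : 1 + logWeight n ≤ 4 * √(n + 1) := by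
  set s := √((n : ℝ) + 1)
  have hs : s ^ 2 = n + 1 := sq_sqrt (by positivity)
  have hs0 : 0 < s := sqrt_pos.2 (by positivity)
  have hle : 2 * ((n : ℝ) + 1) * (n + 2) ≤ 4 * s ^ 4 := by nlinarith
  have hlog : logWeight n ≤ log 4 + 4 * log s := by
    have : log (4 * s ^ 4) = log 4 + 4 * log s := by
      rw [log_mul (by norm_num) (by positivity), log_pow]; norm_num
    exact this ▸ log_le_log (by positivity) hle
  have h4 : log 4 = 2 * log 2 := by
    rw [show (4 : ℝ) = 2 ^ 2 by norm_num, log_pow]; norm_num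
  linarith [log_le_sub_one_of_pos hs0, log_two_lt_d9]

lemma one_add_logWeight_le_mul_add {t : ℝ} (ht0 : 0 < t) (ht1 : t ≤ 1) (n : ℕ) :
    1 + logWeight n ≤ t * n + 4 + 2 * log t⁻¹ := by
  have hle : 2 * ((n : ℝ) + 1) * (n + 2) ≤ 2 * (n + 2) ^ 2 := by nlinarith
  have hlog : logWeight n ≤ log 2 + 2 * log (n + 2) := by
    have : log (2 * ((n : ℝ) + 2) ^ 2) = log 2 + 2 * log (n + 2) := by
      rw [log_mul (by norm_num) (by positivity), log_pow]; norm_num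
    exact this ▸ log_le_log (by positivity) hle
  have hlin := log_le_mul_sub_one_add_log_inv (x := n + 2) (by positivity) (half_pos ht0)
  rw [inv_div, log_div two_ne_zero ht0.ne'] at hlin
  rw [log_inv]
  linarith [log_two_lt_d9]

lemma log_div_le_mul {x δ : ℝ} (hx : 1 ≤ x) (hδ0 : 0 < δ) (hδ1 : δ ≤ 1) :
    log (x / δ) ≤ (1 + log x) * (1 + log (1 / δ)) := by
  have hx0 : 0 ≤ log x := log_nonneg hx
  have hδ : 0 ≤ log (1 / δ) := log_nonneg (by rwa [le_div_iff₀ hδ0, one_mul])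
  rw [div_eq_mul_one_div x, log_mul (by positivity) (by positivity)]
  nlinarith [mul_nonneg hx0 hδ]

lemma nonneg_of_succ_mul_sq_le {u X : ℝ} {n : ℕ} (hX : (n + 1) * u ^ 2 ≤ X * (1 + logWeight n)) :
    0 ≤ X := by
  nlinarith [logWeight_nonneg n, sq_nonneg u, (n.cast_nonneg : (0 : ℝ) ≤ n)]

/-- The paper's `r_δ(n + 1)`: the sum is reindexed to start at `n = 0`. -/
def confRadius (δ : ℝ) (n : ℕ) : ℝ :=
  min (1 / 2) (√(6 / (n + 1) * log (2 * (n + 1) * (n + 2) / δ)))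

lemma confRadius_nonneg (δ : ℝ) (n : ℕ) : 0 ≤ confRadius δ n :=
  le_min (by norm_num) (sqrt_nonneg _)

lemma confRadius_le_half (δ : ℝ) (n : ℕ) : confRadius δ n ≤ 1 / 2 := min_le_left _ _

lemma succ_mul_confRadius_sq_le {δ : ℝ} (hδ0 : 0 < δ) (hδ1 : δ ≤ 1) (n : ℕ) :
    (n + 1) * confRadius δ n ^ 2 ≤ 6 * (1 + logWeight n) * (1 + log (1 / δ)) := by
  have hx : 1 ≤ 2 * ((n : ℝ) + 1) * (n + 2) := by nlinarith [(n.cast_nonneg : (0 : ℝ) ≤ n)]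
  have hq0 : 0 ≤ log (2 * ((n : ℝ) + 1) * (n + 2) / δ) :=
    log_nonneg (by rw [le_div_iff₀ hδ0]; linarith)
  have hsq : confRadius δ n ^ 2 ≤ 6 / (n + 1) * log (2 * (n + 1) * (n + 2) / δ) :=
    calc confRadius δ n ^ 2 ≤ √(6 / (n + 1) * log (2 * (n + 1) * (n + 2) / δ)) ^ 2 :=
          pow_le_pow_left₀ (confRadius_nonneg δ n) (min_le_right _ _) 2
      _ = _ := sq_sqrt (by positivity)
  calc (n + 1) * confRadius δ n ^ 2
      ≤ (n + 1) * (6 / (n + 1) * log (2 * (n + 1) * (n + 2) / δ)) := by gcongr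
    _ = 6 * log (2 * (n + 1) * (n + 2) / δ) := by field_simp
    _ ≤ 6 * (1 + logWeight n) * (1 + log (1 / δ)) := by
      unfold logWeight; linarith [log_div_le_mul hx hδ0 hδ1]

lemma mul_powGap_le_of_one_lt {p u M X : ℝ} {n : ℕ} (hp0 : 0 ≤ p) (hp1 : p ≤ 1) (hu : 1 < u)
    (huM : u ≤ M) (hX : (n + 1) * u ^ 2 ≤ X * (1 + logWeight n)) :
    u * p * powGap p u n ≤ 256 * M * p * X ^ 4 / (n + 1) ^ 2 := by
  have hn : (0 : ℝ) < n + 1 := by positivity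
  have hX0 := nonneg_of_succ_mul_sq_le hX
  have hs : √((n : ℝ) + 1) ^ 4 = (n + 1) ^ 2 := by
    rw [show 4 = 2 * 2 by rfl, pow_mul, sq_sqrt hn.le]
  have h1 : (n + 1) * u ^ 2 ≤ 4 * X * √(n + 1) := by
    nlinarith [one_add_logWeight_le_sqrt n]
  have h2 : (n + 1) ^ 2 * (n + 1) ^ 2 * (u ^ 2) ^ 4 ≤ 256 * X ^ 4 * (n + 1) ^ 2 := by
    have := pow_le_pow_left₀ (by positivity) h1 4
    rw [mul_pow, mul_pow, hs] at this
    linarith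
  have h3 : (n + 1) ^ 2 * (u ^ 2) ^ 4 ≤ 256 * X ^ 4 :=
    le_of_mul_le_mul_right (by linarith) (by positivity : (0 : ℝ) < (n + 1) ^ 2)
  have hu8 : 1 ≤ (u ^ 2) ^ 4 := one_le_pow₀ (by nlinarith)
  have hMp : 0 ≤ M * p := mul_nonneg (by linarith) hp0
  have hup : u * p * powGap p u n ≤ M * p :=
    calc u * p * powGap p u n ≤ u * p * 1 :=
          mul_le_mul_of_nonneg_left (powGap_le_one hp0 hp1 (by linarith) n)
            (mul_nonneg (by linarith) hp0)
      _ ≤ M * p := by rw [mul_one]; exact mul_le_mul_of_nonneg_right huM hp0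
  rw [le_div_iff₀ (by positivity)]
  calc u * p * powGap p u n * (n + 1) ^ 2 ≤ M * p * (n + 1) ^ 2 :=
        mul_le_mul_of_nonneg_right hup (by positivity)
    _ ≤ M * p * ((n + 1) ^ 2 * (u ^ 2) ^ 4) :=
        mul_le_mul_of_nonneg_left (le_mul_of_one_le_right (by positivity) hu8) hMp
    _ ≤ M * p * (256 * X ^ 4) := mul_le_mul_of_nonneg_left h3 hMp
    _ = 256 * M * p * X ^ 4 := by ring

lemma mul_powGap_le_of_le_one {p u X : ℝ} {n : ℕ} (hp0 : 0 < p) (hp1 : p ≤ 1) (hu0 : 0 ≤ u)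
    (hu1 : u ≤ 1) (hX : (n + 1) * u ^ 2 ≤ X * (1 + logWeight n)) :
    u * p * powGap p u n ≤ 2 * p ^ 2 * X *
      (p * exp (-1) * n + (4 + 2 * log (p * exp (-1))⁻¹)) * (1 - p * exp (-1)) ^ n := by
  set a := p * exp (-1)
  have ha0 : 0 < a := by positivity
  have ha : a ≤ 1 / 2 := by
    have : exp (-1) ≤ 1 / 2 := by
      rw [exp_neg, inv_le_comm₀ (exp_pos 1) (by norm_num)]; linarith [exp_one_gt_d9]
    nlinarith
  have hX0 := nonneg_of_succ_mul_sq_le hX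
  have hpow : (1 - a) ^ (n - 1) ≤ 2 * (1 - a) ^ n := by
    cases n with
    | zero => norm_num
    | succ k =>
      rw [Nat.add_sub_cancel, pow_succ]
      nlinarith [pow_nonneg (by linarith : (0 : ℝ) ≤ 1 - a) k]
  have h1a : 0 ≤ 1 - a := by linarith
  calc u * p * powGap p u n ≤ u * p * (n * (p * u) * (1 - a) ^ (n - 1)) :=
        mul_le_mul_of_nonneg_left (powGap_le hp0.le hp1 hu0 hu1 n) (by positivity)
    _ = p ^ 2 * (n * u ^ 2) * (1 - a) ^ (n - 1) := by ring
    _ ≤ p ^ 2 * ((n + 1) * u ^ 2) * (2 * (1 - a) ^ n) := by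
        gcongr p ^ 2 * ?_ * ?_
        linarith [sq_nonneg u]
    _ ≤ p ^ 2 * (X * (a * n + 4 + 2 * log a⁻¹)) * (2 * (1 - a) ^ n) := by
        gcongr p ^ 2 * ?_ * _
        exact hX.trans (mul_le_mul_of_nonneg_left
          (one_add_logWeight_le_mul_add ha0 (by linarith) n) hX0)
    _ = _ := by ring

lemma mul_powGap_le {p u M X : ℝ} {n : ℕ} (hp0 : 0 < p) (hp1 : p ≤ 1) (hu0 : 0 ≤ u)
    (huM : u ≤ M) (hX : (n + 1) * u ^ 2 ≤ X * (1 + logWeight n)) :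
    u * p * powGap p u n ≤ 256 * M * p * X ^ 4 / (n + 1) ^ 2 + 2 * p ^ 2 * X *
      (p * exp (-1) * n + (4 + 2 * log (p * exp (-1))⁻¹)) * (1 - p * exp (-1)) ^ n := by
  have hX0 := nonneg_of_succ_mul_sq_le hX
  have ha : p * exp (-1) ≤ 1 := by
    nlinarith [exp_le_one_iff.2 (by norm_num : (-1 : ℝ) ≤ 0), exp_pos (-1)]
  rcases le_or_gt u 1 with hu1 | hu1
  · refine (mul_powGap_le_of_le_one hp0 hp1 hu0 hu1 hX).trans (le_add_of_nonneg_left ?_)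
    have : 0 ≤ M := hu0.trans huM
    positivity
  · refine (mul_powGap_le_of_one_lt hp0.le hp1 hu1 huM hX).trans (le_add_of_nonneg_right ?_)
    have : 0 ≤ log (p * exp (-1))⁻¹ := log_nonneg (one_le_inv_iff₀.2 ⟨by positivity, ha⟩)
    have : 0 ≤ 1 - p * exp (-1) := by linarith
    positivity

lemma tsum_le_of_le_inv_sq_add_geometric {f : ℕ → ℝ} {A B a β : ℝ} (ha0 : 0 < a) (ha1 : a ≤ 1)
    (hf0 : ∀ n, 0 ≤ f n) (hf : ∀ n, f n ≤ A / (n + 1) ^ 2 + B * (a * n + β) * (1 - a) ^ n) :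
    ∑' n, f n ≤ A * ∑' n : ℕ, 1 / ((n : ℝ) + 1) ^ 2 + B * (1 - a + β) / a := by
  have hinv : Summable fun n : ℕ => 1 / ((n : ℝ) + 1) ^ 2 := by
    have := (summable_nat_add_iff 1).2 (summable_one_div_nat_pow.2 one_lt_two)
    exact_mod_cast this
  have hnorm : ‖1 - a‖ < 1 := by rw [norm_eq_abs, abs_lt]; constructor <;> linarith
  have hgeom := hasSum_geometric_of_norm_lt_one hnorm
  have hmul := hasSum_coe_mul_geometric_of_norm_lt_one hnorm
  have hg := hinv.hasSum.mul_left A |>.add ((hmul.mul_left (B * a)).add (hgeom.mul_left (B * β)))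
  have hf' : ∀ n, f n ≤
      A * (1 / ((n : ℝ) + 1) ^ 2) + (B * a * (n * (1 - a) ^ n) + B * β * (1 - a) ^ n) :=
    fun n => (hf n).trans_eq (by ring)
  refine (hasSum_le hf' (Summable.of_nonneg_of_le hf0 hf' hg.summable).hasSum hg).trans_eq ?_
  rw [sub_sub_cancel]
  field_simp

lemma pow_mul_exp_neg_le_factorial {x : ℝ} (hx : 0 ≤ x) (k : ℕ) : x ^ k * exp (-x) ≤ k ! := by
  rw [exp_neg, ← div_eq_mul_inv, div_le_iff₀ (exp_pos x), ← div_le_iff₀' (by positivity)]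
  exact pow_div_factorial_le_exp _ hx k

def gapBoundConst : ℝ :=
  2 ^ 11 * 1536 ^ 4 * 9 ! * ∑' n : ℕ, 1 / ((n : ℝ) + 1) ^ 2 + 3072 * 54 * exp 1

lemma gapBoundConst_pos : 0 < gapBoundConst := by
  have : 0 ≤ ∑' n : ℕ, 1 / ((n : ℝ) + 1) ^ 2 := tsum_nonneg fun n => by positivity
  unfold gapBoundConst
  positivity

lemma dominating_sum_le {L p P : ℝ} (hL : 1 ≤ L) (hp : exp (-L) = p) (hP : 1 ≤ P) :
    256 * (8 * L) * p * (1536 * L ^ 2 * P) ^ 4 * ∑' n : ℕ, 1 / ((n : ℝ) + 1) ^ 2 +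
        2 * p ^ 2 * (1536 * L ^ 2 * P) *
          (1 - p * exp (-1) + (4 + 2 * log (p * exp (-1))⁻¹)) / (p * exp (-1)) ≤
      gapBoundConst * P ^ 4 := by
  have hp0 : 0 < p := hp ▸ exp_pos _
  have hloga : log (p * exp (-1))⁻¹ = L + 1 := by
    rw [← hp, ← exp_add, ← exp_neg, log_exp]; ring
  have h9 : L ^ 9 * p ≤ 9 ! := hp ▸ pow_mul_exp_neg_le_factorial (by linarith) 9
  have h3 : L ^ 3 * p ≤ 3 ! := hp ▸ pow_mul_exp_neg_le_factorial (by linarith) 3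
  have hS : 0 ≤ ∑' n : ℕ, 1 / ((n : ℝ) + 1) ^ 2 := tsum_nonneg fun n => by positivity
  have hlarge : 256 * (8 * L) * p * (1536 * L ^ 2 * P) ^ 4 * ∑' n : ℕ, 1 / ((n : ℝ) + 1) ^ 2 ≤
      2 ^ 11 * 1536 ^ 4 * 9 ! * (∑' n : ℕ, 1 / ((n : ℝ) + 1) ^ 2) * P ^ 4 :=
    calc _ = 2 ^ 11 * 1536 ^ 4 * (L ^ 9 * p) * (∑' n : ℕ, 1 / ((n : ℝ) + 1) ^ 2) * P ^ 4 := by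
          ring
      _ ≤ _ := by gcongr
  have hsmall : 2 * p ^ 2 * (1536 * L ^ 2 * P) *
      (1 - p * exp (-1) + (4 + 2 * (L + 1))) / (p * exp (-1)) ≤ 3072 * 54 * exp 1 * P ^ 4 :=
    calc _ = 3072 * exp 1 * P * (L ^ 2 * p * (7 + 2 * L - p * exp (-1))) := by
          rw [exp_neg]; field_simp; ring
      _ ≤ 3072 * exp 1 * P * (L ^ 2 * p * (9 * L)) := by
          gcongr; linarith [mul_pos hp0 (exp_pos (-1))]
      _ = 3072 * exp 1 * P * (9 * (L ^ 3 * p)) := by ring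
      _ ≤ 3072 * exp 1 * P * (9 * 3 !) := by gcongr
      _ ≤ 3072 * 54 * exp 1 * P ^ 4 := by
          norm_num [Nat.factorial]
          nlinarith [le_self_pow₀ hP (by norm_num : 4 ≠ 0), exp_pos 1]
  rw [hloga, gapBoundConst]
  linarith

theorem tsum_mul_powGap_le {L p δ : ℝ} (hL : 1 ≤ L) (hp : exp (-L) = p) (hδ0 : 0 < δ)
    (hδ1 : δ ≤ 1) :
    ∑' n, 16 * L * confRadius δ n * p * powGap p (16 * L * confRadius δ n) n ≤
      gapBoundConst * (1 + log (1 / δ)) ^ 4 := by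
  set P := 1 + log (1 / δ)
  have hP : 1 ≤ P := by linarith [log_nonneg (one_le_one_div hδ0 hδ1)]
  have hp0 : 0 < p := hp ▸ exp_pos _
  have hp1 : p ≤ 1 := hp ▸ exp_le_one_iff.2 (by linarith)
  have ha0 : 0 < p * exp (-1) := by positivity
  have ha1 : p * exp (-1) ≤ 1 := by
    nlinarith [exp_le_one_iff.2 (by norm_num : (-1 : ℝ) ≤ 0), exp_pos (-1)]
  have hu0 n : 0 ≤ 16 * L * confRadius δ n := by
    have := confRadius_nonneg δ n; positivity
  have hu n : 16 * L * confRadius δ n ≤ 8 * L := by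
    nlinarith [confRadius_le_half δ n]
  have hX (n : ℕ) : (n + 1) * (16 * L * confRadius δ n) ^ 2 ≤
      1536 * L ^ 2 * P * (1 + logWeight n) :=
    calc (n + 1) * (16 * L * confRadius δ n) ^ 2
        = 256 * L ^ 2 * ((n + 1) * confRadius δ n ^ 2) := by ring
      _ ≤ 256 * L ^ 2 * (6 * (1 + logWeight n) * P) :=
          mul_le_mul_of_nonneg_left (succ_mul_confRadius_sq_le hδ0 hδ1 n) (by positivity)
      _ = _ := by ring
  refine (tsum_le_of_le_inv_sq_add_geometric ha0 ha1
    (fun n => mul_nonneg (mul_nonneg (hu0 n) hp0.le) (powGap_nonneg hp0.le hp1 (hu0 n) n))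
    (fun n => mul_powGap_le hp0 hp1 (hu0 n) (hu n) (hX n))).trans ?_
  exact dominating_sum_le hL hp hP

lemma summand_eq_inv_mul_powGap {lam p L m : ℝ} (hlam : lam ≠ 0) (hp : exp (-L) = p) (n : ℕ) :
    16 * (L / lam) * m * (1 - (1 - exp (-lam * (L / lam)))) *
        ((1 - exp (-lam * (L / lam + 16 * (L / lam) * m))) ^ n - (1 - exp (-lam * (L / lam))) ^ n) =
      lam⁻¹ * (16 * L * m * p * powGap p (16 * L * m) n) := by
  have h1 : -lam * (L / lam) = -L := by field_simp
  have h2 : -lam * (L / lam + 16 * (L / lam) * m) = -L + -(16 * L * m) := by field_simp; ring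
  rw [h1, h2, exp_add, hp, powGap]
  field_simp
  ring

theorem exponential_suboptimality_gap_bound :
    ∃ C : ℝ, 0 < C ∧ ∃ k : ℕ,
      ∀ c lam δ : ℝ, 0 < c → 0 < lam → lam ≤ 1 / (c * Real.exp 1) →
        0 < δ → δ < 1 →
        (∑' n : ℕ,
            (16 * (Real.log (1 / (lam * c)) / lam) *
                min (1/2) (Real.sqrt (6 / (n + 1) *
                  Real.log (2 * (n + 1) * (n + 2) / δ)))) *
              (1 - (1 - Real.exp (-lam * (Real.log (1 / (lam * c)) / lam)))) *
              ((1 - Real.exp (-lam * ((Real.log (1 / (lam * c)) / lam) +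
                  16 * (Real.log (1 / (lam * c)) / lam) *
                    min (1/2) (Real.sqrt (6 / (n + 1) *
                      Real.log (2 * (n + 1) * (n + 2) / δ)))))) ^ n -
                (1 - Real.exp (-lam * (Real.log (1 / (lam * c)) / lam))) ^ n))
          ≤ C * (1 / lam) * (1 + Real.log (1 / δ)) ^ k := by
  refine ⟨gapBoundConst, gapBoundConst_pos, 4, fun c lam δ hc hlam hle hδ0 hδ1 => ?_⟩
  have hp0 : 0 < lam * c := mul_pos hlam hc
  have hp : exp (-log (1 / (lam * c))) = lam * c := by
    rw [exp_neg, exp_log (by positivity), one_div, inv_inv]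
  have hL : 1 ≤ log (1 / (lam * c)) := by
    rw [le_div_iff₀ (by positivity)] at hle
    rw [le_log_iff_exp_le (by positivity), le_div_iff₀ hp0]
    linarith
  calc _ = ∑' n : ℕ, lam⁻¹ * (16 * log (1 / (lam * c)) * confRadius δ n * (lam * c) *
          powGap (lam * c) (16 * log (1 / (lam * c)) * confRadius δ n) n) :=
        tsum_congr fun n => summand_eq_inv_mul_powGap hlam.ne' hp n
    _ ≤ lam⁻¹ * (gapBoundConst * (1 + log (1 / δ)) ^ 4) := by
        rw [tsum_mul_left]; gcongr; exact tsum_mul_powGap_le hL hp hδ0 hδ1.le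
    _ = _ := by ring
end
end
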